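/- Let w₁, w₂ > 0 and let D ∈ M_3(ℝ) be the Dirac operator of the chain w₁−w₂, i.e. D_{12} = D_{21} = 1/w₁, D_{23} = D_{32} = 1/w₂ and all other entries 0. Then the noncommutative length satisfies λ(w₁−w₂) = d^D(1,3) = sqrt(w₁² + w₂²). -/

import Mathlib

open scoped ENNReal

/-- The operator norm on square matrices induced by the Euclidean (ℓ²) norm. -/
noncomputable def opNorm {ι : Type*} [Finite ι] (M : Matrix ι ι ℂ) : ℝ :=
  letI := Fintype.ofFinite ι
  letI := Classical.decEq ι
  ‖Matrix.toEuclideanCLM (𝕜 := ℂ) M‖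

/-- The commutator `[D, π(a)]` of a matrix with the diagonal matrix of `a`. -/
noncomputable def commD {ι : Type*} [Finite ι] (D : Matrix ι ι ℂ) (a : ι → ℂ) : Matrix ι ι ℂ :=
  letI := Fintype.ofFinite ι
  letI := Classical.decEq ι
  D * Matrix.diagonal a - Matrix.diagonal a * D

/-- Connes' noncommutative distance associated to the Dirac operator `D`. -/
noncomputable def ncDist {ι : Type*} [Finite ι] (D : Matrix ι ι ℂ) (i j : ι) : ℝ≥0∞ :=
  ⨆ (a : ι → ℂ) (_ : opNorm (commD D a) ≤ 1), ENNReal.ofReal ‖a i - a j‖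

/-- The weight of an edge: the inverse of `|D i j|` (infinite if `D i j = 0`). -/
noncomputable def eWeight {ι : Type*} (D : Matrix ι ι ℂ) (u v : ι) : ℝ≥0∞ :=
  (ENNReal.ofReal ‖D u v‖)⁻¹

/-- Adjacency in the graph `G_D`. -/
def Adjac {ι : Type*} (D : Matrix ι ι ℂ) (u v : ι) : Prop := u ≠ v ∧ D u v ≠ 0

/-- The length of a walk `i :: p` computed with weights `eWeight D`. -/
noncomputable def walkLength {ι : Type*} (D : Matrix ι ι ℂ) : ι → List ι → ℝ≥0∞
  | _, [] => 0
  | u, v :: rest => eWeight D u v + walkLength D v rest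

/-- `i :: p` is a walk from `i` to `j` in the graph `G_D`. -/
def IsWalk {ι : Type*} (D : Matrix ι ι ℂ) (i j : ι) (p : List ι) : Prop :=
  List.Chain (Adjac D) i p ∧ (i :: p).getLast (List.cons_ne_nil _ _) = j

/-- `i` and `j` lie in the same connected component of `G_D`. -/
def Conn {ι : Type*} (D : Matrix ι ι ℂ) (i j : ι) : Prop := ∃ p, IsWalk D i j p

/-- The geodesic (weighted shortest-path) distance on `G_D`. -/
noncomputable def gDist {ι : Type*} (D : Matrix ι ι ℂ) (i j : ι) : ℝ≥0∞ :=
  ⨅ (p : List ι) (_ : IsWalk D i j p), walkLength D i p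

/-! The commutator `[D, π(a)]` of the chain is the skew tridiagonal matrix with off-diagonal
entries `x = (a 1 - a 0) / w₁` and `y = (a 2 - a 1) / w₂`; its operator norm is
`√(|x|² + |y|²)`, attained on the middle basis vector. Hence `‖[D, π(a)]‖ ≤ 1` means
`|x|² + |y|² ≤ 1`, and then `|a 0 - a 2| ≤ w₁ |x| + w₂ |y| ≤ √(w₁² + w₂²)` by Cauchy–Schwarz,
with equality when the increments of `a` are proportional to `w₁²` and `w₂²`. -/

open Matrix WithLp

lemma opNorm_eq_norm_toEuclideanCLM {ι : Type*} [Fintype ι] [DecidableEq ι] (M : Matrix ι ι ℂ) :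
    opNorm M = ‖toEuclideanCLM (𝕜 := ℂ) M‖ := by
  unfold opNorm
  congr!

lemma commD_apply {ι : Type*} [Finite ι] (D : Matrix ι ι ℂ) (a : ι → ℂ) (i j : ι) :
    commD D a i j = D i j * (a j - a i) := by
  let := Fintype.ofFinite ι
  let := Classical.decEq ι
  simp only [commD, Matrix.sub_apply, mul_diagonal, diagonal_mul]
  ring

lemma le_ncDist {ι : Type*} [Finite ι] {D : Matrix ι ι ℂ} {a : ι → ℂ}
    (ha : opNorm (commD D a) ≤ 1) (i j : ι) : ENNReal.ofReal ‖a i - a j‖ ≤ ncDist D i j :=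
  le_iSup₂ (f := fun (b : ι → ℂ) (_ : opNorm (commD D b) ≤ 1) => ENNReal.ofReal ‖b i - b j‖) a ha

lemma ncDist_le {ι : Type*} [Finite ι] {D : Matrix ι ι ℂ} {i j : ι} {r : ℝ}
    (h : ∀ a, opNorm (commD D a) ≤ 1 → ‖a i - a j‖ ≤ r) : ncDist D i j ≤ ENNReal.ofReal r :=
  iSup₂_le fun a ha => ENNReal.ofReal_le_ofReal (h a ha)

lemma norm_toLp_col_le {𝕜 ι : Type*} [RCLike 𝕜] [Fintype ι] [DecidableEq ι] (A : Matrix ι ι 𝕜)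
    (j : ι) : ‖toLp 2 (A.col j)‖ ≤ ‖toEuclideanCLM (𝕜 := 𝕜) A‖ := by
  have h := (toEuclideanCLM (𝕜 := 𝕜) A).le_opNorm (toLp 2 (Pi.single j 1))
  rw [toEuclideanCLM_toLp, mulVec_single_one] at h
  simpa using h

lemma mul_add_mul_sq_le (a b c d : ℝ) :
    (a * b + c * d) ^ 2 ≤ (a ^ 2 + c ^ 2) * (b ^ 2 + d ^ 2) := by
  nlinarith [sq_nonneg (a * d - b * c)]

lemma mul_add_mul_le_sqrt_mul_sqrt (a b c d : ℝ) :
    a * b + c * d ≤ √(a ^ 2 + c ^ 2) * √(b ^ 2 + d ^ 2) := by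
  rw [← Real.sqrt_mul (by positivity)]
  exact (le_abs_self _).trans (Real.abs_le_sqrt (mul_add_mul_sq_le a b c d))

def tridiagSkew {𝕜 : Type*} [RCLike 𝕜] (x y : 𝕜) : Matrix (Fin 3) (Fin 3) 𝕜 :=
  !![0, x, 0; -x, 0, y; 0, -y, 0]

lemma norm_toEuclideanCLM_tridiagSkew {𝕜 : Type*} [RCLike 𝕜] (x y : 𝕜) :
    ‖toEuclideanCLM (𝕜 := 𝕜) (tridiagSkew x y)‖ = √(‖x‖ ^ 2 + ‖y‖ ^ 2) := by
  apply le_antisymm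
  · refine ContinuousLinearMap.opNorm_le_bound _ (by positivity) fun v => ?_
    refine (sq_le_sq₀ (by positivity) (by positivity)).mp ?_
    have hTv : ‖toEuclideanCLM (𝕜 := 𝕜) (tridiagSkew x y) v‖ ^ 2 =
        (‖x‖ ^ 2 + ‖y‖ ^ 2) * ‖v 1‖ ^ 2 + ‖-(x * v 0) + y * v 2‖ ^ 2 := by
      simp [EuclideanSpace.norm_sq_eq, Fin.sum_univ_three, tridiagSkew, mulVec, dotProduct, mul_pow]
      ring
    have hmid : ‖-(x * v 0) + y * v 2‖ ^ 2 ≤ (‖x‖ ^ 2 + ‖y‖ ^ 2) * (‖v 0‖ ^ 2 + ‖v 2‖ ^ 2) :=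
      calc ‖-(x * v 0) + y * v 2‖ ^ 2 ≤ (‖x‖ * ‖v 0‖ + ‖y‖ * ‖v 2‖) ^ 2 := by
            gcongr
            simpa using norm_add_le (-(x * v 0)) (y * v 2)
        _ ≤ _ := mul_add_mul_sq_le _ _ _ _
    rw [hTv, mul_pow, Real.sq_sqrt (by positivity), EuclideanSpace.norm_sq_eq, Fin.sum_univ_three]
    linarith
  · simpa [EuclideanSpace.norm_eq, Fin.sum_univ_three, tridiagSkew] using
      norm_toLp_col_le (tridiagSkew x y) 1

noncomputable def chainDirac₃ (w₁ w₂ : ℝ) : Matrix (Fin 3) (Fin 3) ℂ :=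
  !![0, ((w₁⁻¹ : ℝ) : ℂ), 0;
     ((w₁⁻¹ : ℝ) : ℂ), 0, ((w₂⁻¹ : ℝ) : ℂ);
     0, ((w₂⁻¹ : ℝ) : ℂ), 0]

lemma commD_chainDirac₃ (w₁ w₂ : ℝ) (a : Fin 3 → ℂ) :
    commD (chainDirac₃ w₁ w₂) a =
      tridiagSkew (((w₁⁻¹ : ℝ) : ℂ) * (a 1 - a 0)) (((w₂⁻¹ : ℝ) : ℂ) * (a 2 - a 1)) := by
  ext i j
  fin_cases i <;> fin_cases j <;> simp [commD_apply, chainDirac₃, tridiagSkew] <;> ring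

lemma opNorm_commD_chainDirac₃ (w₁ w₂ : ℝ) (a : Fin 3 → ℂ) :
    opNorm (commD (chainDirac₃ w₁ w₂) a) = √((‖a 1 - a 0‖ / w₁) ^ 2 + (‖a 2 - a 1‖ / w₂) ^ 2) := by
  rw [opNorm_eq_norm_toEuclideanCLM, commD_chainDirac₃, norm_toEuclideanCLM_tridiagSkew]
  simp [mul_pow, inv_pow, div_eq_inv_mul]

lemma norm_sub_le_of_opNorm_commD_chainDirac₃_le_one {w₁ w₂ : ℝ} (hw₁ : 0 < w₁) (hw₂ : 0 < w₂)
    {a : Fin 3 → ℂ} (ha : opNorm (commD (chainDirac₃ w₁ w₂) a) ≤ 1) :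
    ‖a 0 - a 2‖ ≤ √(w₁ ^ 2 + w₂ ^ 2) := by
  rw [opNorm_commD_chainDirac₃] at ha
  calc ‖a 0 - a 2‖ = ‖(a 1 - a 0) + (a 2 - a 1)‖ := by rw [← norm_neg]; ring_nf
    _ ≤ ‖a 1 - a 0‖ + ‖a 2 - a 1‖ := norm_add_le _ _
    _ = w₁ * (‖a 1 - a 0‖ / w₁) + w₂ * (‖a 2 - a 1‖ / w₂) := by field_simp
    _ ≤ √(w₁ ^ 2 + w₂ ^ 2) * √((‖a 1 - a 0‖ / w₁) ^ 2 + (‖a 2 - a 1‖ / w₂) ^ 2) :=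
      mul_add_mul_le_sqrt_mul_sqrt _ _ _ _
    _ ≤ √(w₁ ^ 2 + w₂ ^ 2) := mul_le_of_le_one_right (Real.sqrt_nonneg _) ha

lemma exists_opNorm_commD_chainDirac₃_le_one {w₁ w₂ : ℝ} (hw₁ : 0 < w₁) (hw₂ : 0 < w₂) :
    ∃ a : Fin 3 → ℂ, opNorm (commD (chainDirac₃ w₁ w₂) a) ≤ 1 ∧
      ‖a 0 - a 2‖ = √(w₁ ^ 2 + w₂ ^ 2) := by
  set L := √(w₁ ^ 2 + w₂ ^ 2)
  have hL : 0 < L := by positivity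
  have hL2 : L ^ 2 = w₁ ^ 2 + w₂ ^ 2 := Real.sq_sqrt (by positivity)
  refine ⟨fun i => ((![0, w₁ ^ 2 / L, L] i : ℝ) : ℂ), ?_, ?_⟩ <;>
    simp only [opNorm_commD_chainDirac₃, ← Complex.ofReal_sub, Complex.norm_real, Real.norm_eq_abs,
      Matrix.cons_val]
  · have e1 : |w₁ ^ 2 / L - 0| / w₁ = w₁ / L := by
      rw [sub_zero, abs_of_pos (by positivity)]
      field_simp
    have e2 : |L - w₁ ^ 2 / L| / w₂ = w₂ / L := by
      rw [show L - w₁ ^ 2 / L = w₂ ^ 2 / L by field_simp; linarith, abs_of_pos (by positivity)]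
      field_simp
    have key : (w₁ / L) ^ 2 + (w₂ / L) ^ 2 = 1 := by
      rw [div_pow, div_pow, ← add_div, hL2, div_self (by positivity)]
    rw [e1, e2, key, Real.sqrt_one]
  · simp [abs_of_pos hL]

theorem stmt10 (w₁ w₂ : ℝ) (h1 : 0 < w₁) (h2 : 0 < w₂) :
    ncDist !![0, ((w₁⁻¹ : ℝ) : ℂ), 0;
              ((w₁⁻¹ : ℝ) : ℂ), 0, ((w₂⁻¹ : ℝ) : ℂ);
              0, ((w₂⁻¹ : ℝ) : ℂ), 0] 0 2 =
      ENNReal.ofReal (Real.sqrt (w₁ ^ 2 + w₂ ^ 2)) := by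
  apply le_antisymm
  · exact ncDist_le fun _ => norm_sub_le_of_opNorm_commD_chainDirac₃_le_one h1 h2
  · obtain ⟨a, ha, hdist⟩ := exists_opNorm_commD_chainDirac₃_le_one h1 h2
    rw [← hdist]
    exact le_ncDist ha 0 2
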